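/- For every n ≥ 0, the total number of oscillating tableaux of length n and arbitrary shape, Σ_μ f̃^μ_n (sum over all integer partitions μ), equals n! times the coefficient of t^n in exp(t + t²). -/

import Mathlib

open scoped BigOperators

/-- A function `ℕ → ℕ` represents an integer partition if it is weakly decreasing and
eventually zero (the value at `i` is the length of row `i` of the Young diagram). -/
def IsPartFun (f : ℕ → ℕ) : Prop :=
  (∀ i j : ℕ, i ≤ j → f j ≤ f i) ∧ ∃ N, ∀ i, N ≤ i → f i = 0

/-- The Young diagram of `g` is obtained from that of `f` by adding exactly one square. -/
def AddBox (f g : ℕ → ℕ) : Prop :=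
  ∃ i, g = Function.update f i (f i + 1)

/-- `T` is an oscillating tableau of length `n`: a sequence `∅ = μ⁰, μ¹, …, μⁿ` of
partitions in which consecutive diagrams differ by adding or removing one square. -/
def IsOscTab (n : ℕ) (T : Fin (n + 1) → ℕ → ℕ) : Prop :=
  (∀ k, IsPartFun (T k)) ∧ T 0 = (fun _ => 0) ∧
    ∀ k : Fin n, AddBox (T k.castSucc) (T k.succ) ∨ AddBox (T k.succ) (T k.castSucc)

/-- The formal power series `exp(t + t²)` over `ℚ`; its `n`-th coefficient is
`Σ_{a + 2b = n} 1/(a! b!)`. -/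
noncomputable def expXplusX2 : PowerSeries ℚ :=
  PowerSeries.mk fun n =>
    ∑ b ∈ Finset.range (n + 1),
      if 2 * b ≤ n then (1 : ℚ) / ((n - 2 * b).factorial * b.factorial) else 0

/-!
Let `a n` be the number of oscillating tableaux of length `n`. Splitting a tableau of length
`n + 1` at its last step, and using that a partition has exactly one more addable than removable
corner, gives `a (n + 1) = a n + 2 r n`, where `r n` counts tableaux of length `n` together with a
removable corner of their shape. Young's lattice is a differential poset, `DU = UD + 1`, and
summing this identity over tableaux shows by induction that `r (n + 1) = (n + 1) a n`. Hence
`a (n + 2) = a (n + 1) + 2 (n + 1) a n`, the recurrence satisfied by `n! [tⁿ] exp (t + t²)`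
(from `E' = (1 + 2t) E`), with the same initial values `1, 1`.
-/

open Finset Function

lemma IsPartFun.antitone {f : ℕ → ℕ} (hf : IsPartFun f) : Antitone f := hf.1

def addAt (f : ℕ → ℕ) (i : ℕ) : ℕ → ℕ := update f i (f i + 1)

def removeAt (f : ℕ → ℕ) (i : ℕ) : ℕ → ℕ := update f i (f i - 1)

def Addable (f : ℕ → ℕ) (i : ℕ) : Prop := i = 0 ∨ f i < f (i - 1)

def Removable (f : ℕ → ℕ) (i : ℕ) : Prop := f (i + 1) < f i

instance (f : ℕ → ℕ) : DecidablePred (Removable f) := fun _ => inferInstanceAs (Decidable (_ < _))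

lemma addAt_apply (f : ℕ → ℕ) (i j : ℕ) : addAt f i j = if j = i then f i + 1 else f j :=
  update_apply f i _ j

lemma removeAt_apply (f : ℕ → ℕ) (i j : ℕ) : removeAt f i j = if j = i then f i - 1 else f j :=
  update_apply f i _ j

lemma addable_succ_iff {f : ℕ → ℕ} {i : ℕ} : Addable f (i + 1) ↔ Removable f i := by
  simp [Addable, Removable]

lemma Removable.pos {f : ℕ → ℕ} {i : ℕ} (h : Removable f i) : 0 < f i :=
  (Nat.zero_le _).trans_lt h

lemma removeAt_addAt (f : ℕ → ℕ) (i : ℕ) : removeAt (addAt f i) i = f := by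
  ext j; simp only [removeAt_apply, addAt_apply]; split_ifs <;> simp_all

lemma addAt_removeAt {f : ℕ → ℕ} {i : ℕ} (h : 0 < f i) : addAt (removeAt f i) i = f := by
  ext j; simp only [removeAt_apply, addAt_apply]; split_ifs <;> simp_all; omega

lemma removeAt_addAt_comm (f : ℕ → ℕ) {i j : ℕ} (hij : i ≠ j) :
    removeAt (addAt f i) j = addAt (removeAt f j) i := by
  ext k; simp only [addAt_apply, removeAt_apply]; split_ifs <;> omega

lemma removable_addAt {f : ℕ → ℕ} (hf : Antitone f) (i : ℕ) : Removable (addAt f i) i := by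
  have := hf (Nat.le_add_right i 1)
  simp only [Removable, addAt_apply]; split_ifs <;> omega

lemma addable_removeAt {f : ℕ → ℕ} (hf : Antitone f) {i : ℕ} (hi : Removable f i) :
    Addable (removeAt f i) i := by
  have := hf (Nat.sub_le i 1)
  have := hi.pos
  simp only [Addable, removeAt_apply]; split_ifs <;> omega

lemma addable_of_antitone_addAt {f : ℕ → ℕ} {i : ℕ} (h : Antitone (addAt f i)) : Addable f i := by
  have := h (Nat.sub_le i 1)
  simp only [Addable, addAt_apply] at this ⊢; split_ifs at this <;> omega

lemma IsPartFun.addAt {f : ℕ → ℕ} (hf : IsPartFun f) {i : ℕ} (hi : Addable f i) :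
    IsPartFun (addAt f i) := by
  have hmono := hf.antitone
  obtain ⟨-, N, hN⟩ := hf
  refine ⟨fun a b hab => ?_, max N (i + 1), fun j hj => ?_⟩
  · have := hmono hab
    have : i ≠ 0 → a ≤ i - 1 → f i < f a := fun h0 ha => by
      rcases hi with hi | hi
      · exact absurd hi h0
      · exact hi.trans_le (hmono ha)
    simp only [addAt_apply]; split_ifs <;> subst_vars <;> omega
  · simp only [addAt_apply]; split_ifs <;> simp_all

lemma IsPartFun.removeAt {f : ℕ → ℕ} (hf : IsPartFun f) {i : ℕ} (hi : Removable f i) :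
    IsPartFun (removeAt f i) := by
  have hmono := hf.antitone
  obtain ⟨-, N, hN⟩ := hf
  refine ⟨fun a b hab => ?_, N, fun j hj => ?_⟩
  · have := hmono hab
    have : i < b → f b < f i := fun h => (hmono h).trans_lt hi
    simp only [removeAt_apply]; split_ifs <;> subst_vars <;> omega
  · simp only [removeAt_apply]; split_ifs <;> simp_all

lemma addable_iff_removable_of_ne {f : ℕ → ℕ} (hf : Antitone f) {i j : ℕ} (hij : i ≠ j) :
    Addable f i ∧ Removable (addAt f i) j ↔ Removable f j ∧ Addable (removeAt f j) i := by
  have m1 := hf (Nat.le_add_right j 1)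
  have m2 := hf (Nat.sub_le i 1)
  have e1 : j + 1 = i → f (j + 1) = f i := fun h => by rw [h]
  have e2 : i - 1 = j → f (i - 1) = f j := fun h => by rw [h]
  simp only [Addable, Removable, addAt_apply, removeAt_apply]
  split_ifs <;> omega

-- For a partition, every removable corner lies in a row before the first empty one.
noncomputable def removables (f : ℕ → ℕ) : Finset ℕ :=
  {i ∈ range (sInf {N | f N = 0}) | Removable f i}

noncomputable def addables (f : ℕ → ℕ) : Finset ℕ :=
  insert 0 ((removables f).map (addRightEmbedding 1))

lemma mem_removables {f : ℕ → ℕ} (hf : IsPartFun f) {i : ℕ} :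
    i ∈ removables f ↔ Removable f i := by
  refine ⟨fun h => (mem_filter.1 h).2, fun h => mem_filter.2 ⟨mem_range.2 ?_, h⟩⟩
  obtain ⟨N, hN⟩ := hf.2
  have hzero : f (sInf {N | f N = 0}) = 0 := Nat.sInf_mem (s := {N | f N = 0}) ⟨N, hN N le_rfl⟩
  by_contra hle
  have := hf.antitone (not_lt.1 hle)
  have := h.pos
  omega

lemma mem_addables {f : ℕ → ℕ} (hf : IsPartFun f) {i : ℕ} : i ∈ addables f ↔ Addable f i := by
  cases i with
  | zero => simp [addables, Addable]
  | succ i => simp [addables, mem_removables hf, addable_succ_iff]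

lemma card_addables (f : ℕ → ℕ) : #(addables f) = #(removables f) + 1 := by
  rw [addables, card_insert_of_notMem (by simp), card_map]

noncomputable def upSum (w : (ℕ → ℕ) → ℕ) (f : ℕ → ℕ) : ℕ := ∑ i ∈ addables f, w (addAt f i)

noncomputable def downSum (w : (ℕ → ℕ) → ℕ) (f : ℕ → ℕ) : ℕ :=
  ∑ j ∈ removables f, w (removeAt f j)

lemma downSum_add (w v : (ℕ → ℕ) → ℕ) : downSum (w + v) = downSum w + downSum v := by
  ext f; simp [downSum, sum_add_distrib]

lemma upSum_one : upSum 1 = downSum 1 + 1 := by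
  ext f; simp [upSum, downSum, card_addables]

lemma downSum_zero (w : (ℕ → ℕ) → ℕ) : downSum w 0 = 0 := by
  have : removables (0 : ℕ → ℕ) = ∅ := by simp [removables, Removable]
  simp [downSum, this]

/-- Young's lattice is a differential poset (`DU = UD + 1`): for `i ≠ j`, adding a box in row `i`
and removing one in row `j` may be done in either order, while there are `#(addables f)`
add-remove paths from `f` back to `f` but only `#(removables f) = #(addables f) - 1` remove-add
ones. -/
lemma upSum_downSum (w : (ℕ → ℕ) → ℕ) {f : ℕ → ℕ} (hf : IsPartFun f) :
    upSum (downSum w) f = downSum (upSum w) f + w f := by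
  set off : ℕ → ℕ → ℕ := fun i j => w (addAt (removeAt f j) i)
  have hup : upSum (downSum w) f =
      #(addables f) * w f + ∑ i ∈ addables f, ∑ j ∈ (removables (addAt f i)).erase i, off i j := by
    rw [← smul_eq_mul, ← sum_const, ← sum_add_distrib]
    refine sum_congr rfl fun i hi => ?_
    have hi := (mem_addables hf).1 hi
    have hmem := (mem_removables (hf.addAt hi)).2 (removable_addAt hf.antitone i)
    rw [downSum, ← add_sum_erase _ _ hmem, removeAt_addAt]
    exact congrArg _ <| sum_congr rfl fun j hj => by
      rw [removeAt_addAt_comm _ (ne_of_mem_erase hj).symm]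
  have hdown : downSum (upSum w) f = #(removables f) * w f +
      ∑ j ∈ removables f, ∑ i ∈ (addables (removeAt f j)).erase j, off i j := by
    rw [← smul_eq_mul, ← sum_const, ← sum_add_distrib]
    refine sum_congr rfl fun j hj => ?_
    have hj := (mem_removables hf).1 hj
    have hmem := (mem_addables (hf.removeAt hj)).2 (addable_removeAt hf.antitone hj)
    rw [upSum, ← add_sum_erase _ _ hmem, addAt_removeAt hj.pos]
  have hswap : ∀ i j, i ∈ addables f ∧ j ∈ (removables (addAt f i)).erase i ↔
      i ∈ (addables (removeAt f j)).erase j ∧ j ∈ removables f := by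
    intro i j
    rw [mem_erase, mem_erase, mem_addables hf, mem_removables hf]
    constructor
    · rintro ⟨hi, hji, hj⟩
      have h := (addable_iff_removable_of_ne hf.antitone (Ne.symm hji)).1
        ⟨hi, (mem_removables (hf.addAt hi)).1 hj⟩
      exact ⟨⟨Ne.symm hji, (mem_addables (hf.removeAt h.1)).2 h.2⟩, h.1⟩
    · rintro ⟨⟨hij, hi⟩, hj⟩
      have h := (addable_iff_removable_of_ne hf.antitone hij).2
        ⟨hj, (mem_addables (hf.removeAt hj)).1 hi⟩
      exact ⟨h.1, Ne.symm hij, (mem_removables (hf.addAt h.1)).2 h.2⟩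
  rw [hup, hdown, sum_comm' hswap, card_addables]
  ring

def IsStep (f g : ℕ → ℕ) : Prop := IsPartFun g ∧ (AddBox f g ∨ AddBox g f)

lemma isOscTab_snoc_iff {n : ℕ} {T : Fin (n + 1) → ℕ → ℕ} {g : ℕ → ℕ} :
    IsOscTab (n + 1) (Fin.snoc T g) ↔ IsOscTab n T ∧ IsStep (T (Fin.last n)) g := by
  simp only [IsOscTab, IsStep, Fin.forall_fin_succ' (n := n + 1), Fin.forall_fin_succ' (n := n),
    Fin.snoc_castSucc, Fin.snoc_last, Fin.succ_castSucc, Fin.succ_last, ← Fin.castSucc_zero]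
  tauto

noncomputable def neighbour (f : ℕ → ℕ) : addables f ⊕ removables f → ℕ → ℕ :=
  Sum.elim (fun i => addAt f i) (fun j => removeAt f j)

lemma isStep_neighbour {f : ℕ → ℕ} (hf : IsPartFun f) :
    ∀ s : addables f ⊕ removables f, IsStep f (neighbour f s)
  | .inl ⟨i, hi⟩ => ⟨hf.addAt ((mem_addables hf).1 hi), Or.inl ⟨i, rfl⟩⟩
  | .inr ⟨j, hj⟩ => by
    have hj := (mem_removables hf).1 hj
    exact ⟨hf.removeAt hj, Or.inr ⟨j, (addAt_removeAt hj.pos).symm⟩⟩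

lemma addAt_injective (f : ℕ → ℕ) : Injective (addAt f) := fun i j h => by
  have := congrFun h i
  simp only [addAt_apply] at this
  split_ifs at this <;> omega

lemma removeAt_injOn (f : ℕ → ℕ) : Set.InjOn (removeAt f) {i | 0 < f i} := fun i hi j _ h => by
  have hi : 0 < f i := hi
  have := congrFun h i
  simp only [removeAt_apply] at this
  split_ifs at this <;> omega

lemma addAt_ne_removeAt (f : ℕ → ℕ) (i j : ℕ) : addAt f i ≠ removeAt f j := fun h => by
  have := congrFun h i
  simp only [addAt_apply, removeAt_apply] at this
  split_ifs at this <;> subst_vars <;> omega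

lemma neighbour_injective {f : ℕ → ℕ} (hf : IsPartFun f) : Injective (neighbour f) := by
  rintro (⟨i, hi⟩ | ⟨i, hi⟩) (⟨j, hj⟩ | ⟨j, hj⟩) h <;>
    simp only [neighbour, Sum.elim_inl, Sum.elim_inr] at h
  · simp [addAt_injective f h]
  · exact absurd h (addAt_ne_removeAt f i j)
  · exact absurd h.symm (addAt_ne_removeAt f j i)
  · simp [removeAt_injOn f ((mem_removables hf).1 hi).pos ((mem_removables hf).1 hj).pos h]

lemma exists_neighbour_eq {f g : ℕ → ℕ} (hf : IsPartFun f) (h : IsStep f g) :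
    ∃ s, neighbour f s = g := by
  obtain ⟨hg, ⟨i, rfl⟩ | ⟨i, rfl⟩⟩ := h
  · exact ⟨.inl ⟨i, (mem_addables hf).2 (addable_of_antitone_addAt hg.antitone)⟩, rfl⟩
  · exact ⟨.inr ⟨i, (mem_removables hf).2 (removable_addAt hg.antitone i)⟩, removeAt_addAt g i⟩

abbrev OscTab (n : ℕ) : Type := {T : Fin (n + 1) → ℕ → ℕ // IsOscTab n T}

namespace OscTab

def shape {n : ℕ} (T : OscTab n) : ℕ → ℕ := T.1 (Fin.last n)

lemma isPartFun_shape {n : ℕ} (T : OscTab n) : IsPartFun T.shape := T.2.1 _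

instance : Unique (OscTab 0) where
  default := ⟨fun _ _ => 0, fun _ => ⟨fun _ _ _ => le_rfl, 0, fun _ _ => rfl⟩, rfl, Fin.elim0⟩
  uniq T := Subtype.ext <| funext fun k => by rw [Fin.fin_one_eq_zero k, T.2.2.1]

lemma shape_eq_zero (T : OscTab 0) : T.shape = 0 := T.2.2.1

noncomputable def extend (n : ℕ) (p : Σ T : OscTab n, addables T.shape ⊕ removables T.shape) :
    OscTab (n + 1) :=
  ⟨Fin.snoc (α := fun _ => ℕ → ℕ) p.1.1 (neighbour _ p.2),
    isOscTab_snoc_iff.2 ⟨p.1.2, isStep_neighbour p.1.isPartFun_shape p.2⟩⟩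

lemma coe_extend {n : ℕ} (p : Σ T : OscTab n, addables T.shape ⊕ removables T.shape) :
    (extend n p : Fin (n + 2) → ℕ → ℕ) = Fin.snoc (α := fun _ => ℕ → ℕ) p.1.1 (neighbour _ p.2) :=
  rfl

lemma shape_extend {n : ℕ} (p : Σ T : OscTab n, addables T.shape ⊕ removables T.shape) :
    (extend n p).shape = neighbour _ p.2 := by
  rw [shape, coe_extend, Fin.snoc_last]

lemma extend_bijective (n : ℕ) : Bijective (extend n) := by
  refine ⟨fun ⟨T, s⟩ ⟨T', s'⟩ h => ?_, fun T => ?_⟩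
  · have h := congrArg Subtype.val h
    rw [coe_extend, coe_extend] at h
    obtain ⟨hT, hs⟩ := Fin.snoc_injective2 h
    obtain rfl : T = T' := Subtype.ext hT
    exact congrArg (Sigma.mk T) (neighbour_injective T.isPartFun_shape hs)
  · have hT := isOscTab_snoc_iff.1 (Fin.snoc_init_self T.1 ▸ T.2)
    obtain ⟨s, hs⟩ := exists_neighbour_eq (hT.1.1 (Fin.last n)) hT.2
    refine ⟨⟨⟨Fin.init T.1, hT.1⟩, s⟩, Subtype.ext ?_⟩
    rw [coe_extend]
    change Fin.snoc (α := fun _ => ℕ → ℕ) _ (neighbour (Fin.init T.1 (Fin.last n)) s) = _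
    rw [hs, Fin.snoc_init_self]

instance finite : ∀ n, Finite (OscTab n)
  | 0 => inferInstance
  | n + 1 => have := finite n; Finite.of_surjective _ (extend_bijective n).2

noncomputable instance (n : ℕ) : Fintype (OscTab n) := Fintype.ofFinite _

noncomputable def tabSum (n : ℕ) (w : (ℕ → ℕ) → ℕ) : ℕ := ∑ T : OscTab n, w T.shape

lemma tabSum_zero (w : (ℕ → ℕ) → ℕ) : tabSum 0 w = w 0 := by
  rw [tabSum, Fintype.sum_unique, shape_eq_zero]

lemma tabSum_succ (n : ℕ) (w : (ℕ → ℕ) → ℕ) :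
    tabSum (n + 1) w = tabSum n (upSum w + downSum w) := by
  rw [tabSum, ← Fintype.sum_bijective _ (extend_bijective n) _ _ fun p => rfl, Fintype.sum_sigma]
  refine Fintype.sum_congr _ _ fun T => ?_
  simp only [shape_extend, Fintype.sum_sum_type, neighbour, Sum.elim_inl, Sum.elim_inr]
  exact congrArg₂ (· + ·) (sum_coe_sort (addables _) fun i => w (addAt T.shape i))
    (sum_coe_sort (removables _) fun j => w (removeAt T.shape j))

lemma tabSum_add (n : ℕ) (w v : (ℕ → ℕ) → ℕ) : tabSum n (w + v) = tabSum n w + tabSum n v :=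
  sum_add_distrib

lemma tabSum_congr {n : ℕ} {w v : (ℕ → ℕ) → ℕ} (h : ∀ f, IsPartFun f → w f = v f) :
    tabSum n w = tabSum n v :=
  Fintype.sum_congr _ _ fun T => h _ T.isPartFun_shape

lemma tabSum_succ_downSum_eq (n : ℕ) (w : (ℕ → ℕ) → ℕ) :
    tabSum (n + 1) (downSum w) = tabSum n (downSum (upSum w + downSum w)) + tabSum n w := by
  rw [tabSum_succ, ← tabSum_add]
  refine tabSum_congr fun f hf => ?_
  simp only [Pi.add_apply, upSum_downSum w hf, downSum_add]
  ring

lemma tabSum_succ_downSum (n : ℕ) (w : (ℕ → ℕ) → ℕ) :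
    tabSum (n + 1) (downSum w) = (n + 1) * tabSum n w := by
  induction n generalizing w with
  | zero => rw [tabSum_succ_downSum_eq, tabSum_zero, tabSum_zero, downSum_zero]; ring
  | succ n ih => rw [tabSum_succ_downSum_eq, ih, ← tabSum_succ]; ring

lemma card_eq_tabSum (n : ℕ) : Nat.card (OscTab n) = tabSum n 1 := by
  rw [tabSum, Nat.card_eq_fintype_card, Fintype.card_eq_sum_ones]; rfl

lemma card_zero : Nat.card (OscTab 0) = 1 := Nat.card_unique

lemma card_one : Nat.card (OscTab 1) = 1 := by
  rw [card_eq_tabSum, tabSum_succ, tabSum_zero, upSum_one]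
  simp [downSum_zero]

lemma card_succ_succ (n : ℕ) :
    Nat.card (OscTab (n + 2)) = Nat.card (OscTab (n + 1)) + 2 * (n + 1) * Nat.card (OscTab n) := by
  rw [card_eq_tabSum, tabSum_succ, upSum_one, add_right_comm, tabSum_add, tabSum_add,
    tabSum_succ_downSum, card_eq_tabSum, card_eq_tabSum]
  ring

end OscTab

noncomputable def expCoeffTerm (m b : ℕ) : ℚ :=
  if 2 * b ≤ m then (1 : ℚ) / ((m - 2 * b).factorial * b.factorial) else 0

lemma coeff_expXplusX2 {m N : ℕ} (h : m < N) :
    PowerSeries.coeff m expXplusX2 = ∑ b ∈ range N, expCoeffTerm m b := by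
  rw [expXplusX2, PowerSeries.coeff_mk]
  refine sum_subset (range_subset_range.2 h) fun b _ hb => ?_
  simp only [mem_range, not_lt] at hb
  simp only [if_neg (show ¬2 * b ≤ m by omega)]

lemma succ_mul_expCoeffTerm_zero (m : ℕ) :
    (m + 1 : ℚ) * expCoeffTerm (m + 1) 0 = expCoeffTerm m 0 := by
  simp only [expCoeffTerm, mul_zero, zero_le, if_true, Nat.sub_zero, Nat.factorial_zero,
    Nat.cast_one, mul_one, Nat.factorial_succ, Nat.cast_mul]
  field_simp
  push_cast
  ring

lemma expCoeffTerm_succ_succ (n b : ℕ) :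
    (n + 2 : ℚ) * expCoeffTerm (n + 2) (b + 1) =
      expCoeffTerm (n + 1) (b + 1) + 2 * expCoeffTerm n b := by
  unfold expCoeffTerm
  rcases lt_trichotomy (2 * (b + 1)) (n + 2) with h | h | h
  · obtain ⟨a, rfl⟩ : ∃ a, n = a + 2 * b + 1 := ⟨n - 2 * b - 1, by omega⟩
    rw [if_pos (by omega), if_pos (by omega), if_pos (by omega),
      show a + 2 * b + 1 + 2 - 2 * (b + 1) = a + 1 by omega,
      show a + 2 * b + 1 + 1 - 2 * (b + 1) = a by omega,
      show a + 2 * b + 1 - 2 * b = a + 1 by omega]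
    simp only [Nat.factorial_succ, Nat.cast_mul]
    field_simp
    push_cast
    ring
  · obtain rfl : n = 2 * b := by omega
    rw [if_pos (by omega), if_neg (by omega), if_pos le_rfl,
      show 2 * b + 2 - 2 * (b + 1) = 0 by omega, Nat.sub_self]
    simp only [Nat.factorial_succ, Nat.cast_mul]
    field_simp
    push_cast
    ring
  · rw [if_neg (by omega), if_neg (by omega), if_neg (by omega)]
    ring

lemma coeff_expXplusX2_succ_succ (n : ℕ) :
    (n + 2 : ℚ) * PowerSeries.coeff (n + 2) expXplusX2 =
      PowerSeries.coeff (n + 1) expXplusX2 + 2 * PowerSeries.coeff n expXplusX2 := by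
  rw [coeff_expXplusX2 (N := n + 3) (by omega), coeff_expXplusX2 (N := n + 3) (by omega),
    coeff_expXplusX2 (N := n + 2) (by omega), mul_sum, sum_range_succ', sum_range_succ' _ (n + 2)]
  simp only [expCoeffTerm_succ_succ, sum_add_distrib, mul_sum]
  have h0 := succ_mul_expCoeffTerm_zero (n + 1)
  push_cast at h0
  linear_combination h0

/-- The total number of oscillating tableaux of length `n` and arbitrary shape,
`Σ_μ f̃^μ_n`, equals `n!` times the coefficient of `t^n` in `exp(t + t²)`. -/
theorem total_osc_tableaux (n : ℕ) :
    ((Nat.card {T : Fin (n + 1) → ℕ → ℕ // IsOscTab n T}) : ℚ) =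
      n.factorial * PowerSeries.coeff n expXplusX2 := by
  induction n using Nat.twoStepInduction with
  | zero => rw [OscTab.card_zero, coeff_expXplusX2 zero_lt_one]; simp [expCoeffTerm]
  | one =>
    rw [OscTab.card_one, coeff_expXplusX2 (N := 1 + 1) one_lt_two, sum_range_succ, sum_range_one]
    simp [expCoeffTerm]
  | more n ih₀ ih₁ =>
    rw [OscTab.card_succ_succ, Nat.cast_add, ih₁, Nat.cast_mul, ih₀, Nat.factorial_succ (n + 1),
      Nat.factorial_succ n]
    push_cast
    linear_combination -(n + 1 : ℚ) * n.factorial * coeff_expXplusX2_succ_succ n
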